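/- Let (a,b) ⊆ ℝ be an open interval (with −∞ ≤ a < b ≤ ∞), V₀ : (a,b) → ℝ, ε, E ∈ ℝ, and u : (a,b) → ℝ twice differentiable with u > 0 and −½u'' + V₀u = εu on (a,b). Set κ = u'/u and, for a twice differentiable ψ : (a,b) → ℝ with −½ψ'' + V₀ψ = Eψ on (a,b), set φ = (−ψ' + κψ)/√2. Assume ψ² and φ² are (improperly) integrable on (a,b), that the product x ↦ ψ(x)φ(x)/√2 tends to 0 as x → a⁺ and as x → b⁻, and that (ψφ)' is integrable on (a,b). Then ∫_a^b φ(x)² dx = (E − ε) ∫_a^b ψ(x)² dx. -/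

import Mathlib

/-!
With `φ = (-ψ' + κψ)/√2`, the Riccati equation `κ' = 2(V₀ - ε) - κ²` satisfied by `κ = u'/u`
and the equation `ψ'' = 2(V₀ - E)ψ` give the pointwise identity
`(ψφ/√2)' = (E - ε)ψ² - φ²`. Integrating it over `(a, b)`, the boundary terms vanish.
-/

open Filter Real Topology MeasureTheory Set

namespace EReal

theorem comap_coe_nhdsGT_neBot {a : EReal} (ha : a ≠ ⊤) :
    (comap ((↑) : ℝ → EReal) (𝓝[>] a)).NeBot := by
  refine NeBot.comap_of_range_mem (nhdsGT_neBot_of_exists_gt ⟨⊤, ha.lt_top⟩) ?_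
  rw [range_coe_eq_Ioo]
  exact inter_mem (mem_of_superset self_mem_nhdsWithin (Ioi_subset_Ioi bot_le))
    (mem_nhdsWithin_of_mem_nhds (Iio_mem_nhds ha.lt_top))

theorem comap_coe_nhdsLT_neBot {b : EReal} (hb : b ≠ ⊥) :
    (comap ((↑) : ℝ → EReal) (𝓝[<] b)).NeBot := by
  refine NeBot.comap_of_range_mem (nhdsLT_neBot_of_exists_lt ⟨⊥, hb.bot_lt⟩) ?_
  rw [range_coe_eq_Ioo]
  exact inter_mem (mem_nhdsWithin_of_mem_nhds (Ioi_mem_nhds hb.bot_lt))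
    (mem_of_superset self_mem_nhdsWithin (Iio_subset_Iio le_top))

theorem eventually_comap_coe_nhdsGT {a : EReal} {x : ℝ} (hx : a < x) :
    ∀ᶠ y : ℝ in comap (↑) (𝓝[>] a), a < y ∧ y < x := by
  have h : ∀ᶠ z in 𝓝[>] a, a < z ∧ z < (x : EReal) :=
    eventually_mem_nhdsWithin.and
      (eventually_nhdsWithin_of_eventually_nhds (eventually_lt_nhds hx))
  exact (h.comap _).mono fun _ hy => ⟨hy.1, EReal.coe_lt_coe_iff.mp hy.2⟩

theorem eventually_comap_coe_nhdsLT {b : EReal} {x : ℝ} (hx : (x : EReal) < b) :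
    ∀ᶠ y : ℝ in comap (↑) (𝓝[<] b), x < y ∧ (y : EReal) < b := by
  have h : ∀ᶠ z in 𝓝[<] b, (x : EReal) < z ∧ z < b :=
    (eventually_nhdsWithin_of_eventually_nhds (eventually_gt_nhds hx)).and
      eventually_mem_nhdsWithin
  exact (h.comap _).mono fun _ hy => ⟨EReal.coe_lt_coe_iff.mp hy.1, hy.2⟩

end EReal

theorem integral_preimage_coe_Ioo_eq_sub_of_hasDerivAt_of_tendsto
    {E : Type*} [NormedAddCommGroup E] [NormedSpace ℝ E] [CompleteSpace E]
    {a b : EReal} (hab : a < b) {f f' : ℝ → E} {fa fb : E}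
    (hderiv : ∀ x ∈ ((↑) : ℝ → EReal) ⁻¹' Ioo a b, HasDerivAt f (f' x) x)
    (hint : IntegrableOn f' (((↑) : ℝ → EReal) ⁻¹' Ioo a b))
    (ha : Tendsto f (comap (↑) (𝓝[>] a)) (𝓝 fa))
    (hb : Tendsto f (comap (↑) (𝓝[<] b)) (𝓝 fb)) :
    ∫ x in ((↑) : ℝ → EReal) ⁻¹' Ioo a b, f' x = fb - fa := by
  set I := ((↑) : ℝ → EReal) ⁻¹' Ioo a b
  have : (comap ((↑) : ℝ → EReal) (𝓝[>] a)).NeBot := EReal.comap_coe_nhdsGT_neBot hab.ne_top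
  have : (comap ((↑) : ℝ → EReal) (𝓝[<] b)).NeBot := EReal.comap_coe_nhdsLT_neBot hab.ne_bot
  -- exhaust `I` by the intervals `(p.1, p.2]` with `p.1 → a⁺`, `p.2 → b⁻`
  set l := comap ((↑) : ℝ → EReal) (𝓝[>] a) ×ˢ comap ((↑) : ℝ → EReal) (𝓝[<] b)
  have hcover : AECover (volume.restrict I) l fun p => Ioc p.1 p.2 := by
    refine ⟨?_, fun _ => measurableSet_Ioc⟩
    filter_upwards [ae_restrict_mem (measurableSet_Ioo.preimage measurable_coe_real_ereal)]
      with x hx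
    filter_upwards [(EReal.eventually_comap_coe_nhdsGT hx.1).prod_mk
      (EReal.eventually_comap_coe_nhdsLT hx.2)] with p hp
    exact ⟨hp.1.2, hp.2.1.le⟩
  obtain ⟨c, hac, hcb⟩ := EReal.lt_iff_exists_real_btwn.mp hab
  have hFTC : ∀ᶠ p in l, ∫ x in Ioc p.1 p.2, f' x ∂(volume.restrict I) = f p.2 - f p.1 := by
    filter_upwards [(EReal.eventually_comap_coe_nhdsGT hac).prod_mk
      (EReal.eventually_comap_coe_nhdsLT hcb)] with p ⟨⟨hap, hpc⟩, hcp, hpb⟩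
    have hle : p.1 ≤ p.2 := (hpc.trans hcp).le
    have hsub : Icc p.1 p.2 ⊆ I := fun x hx =>
      ⟨hap.trans_le (EReal.coe_le_coe_iff.mpr hx.1), (EReal.coe_le_coe_iff.mpr hx.2).trans_lt hpb⟩
    rw [Measure.restrict_restrict measurableSet_Ioc,
      inter_eq_left.mpr (Ioc_subset_Icc_self.trans hsub), ← intervalIntegral.integral_of_le hle]
    refine intervalIntegral.integral_eq_sub_of_hasDerivAt
      (fun x hx => hderiv x (hsub (uIcc_of_le hle ▸ hx))) ?_
    exact (intervalIntegrable_iff_integrableOn_Ioc_of_le hle).mpr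
      (hint.mono_set (Ioc_subset_Icc_self.trans hsub))
  exact tendsto_nhds_unique (hcover.integral_tendsto_of_countably_generated hint)
    (((hb.comp tendsto_snd).sub (ha.comp tendsto_fst)).congr' (hFTC.mono fun _ h => h.symm))

noncomputable def darbouxTransform (u ψ : ℝ → ℝ) (x : ℝ) : ℝ :=
  (-deriv ψ x + deriv u x / u x * ψ x) / √2

section Darboux

variable {u ψ : ℝ → ℝ} {x : ℝ}

theorem hasDerivAt_deriv_div_self (hu : DifferentiableAt ℝ u x)
    (hu' : DifferentiableAt ℝ (deriv u) x) (hx : u x ≠ 0) :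
    HasDerivAt (fun y => deriv u y / u y)
      (deriv (deriv u) x / u x - (deriv u x / u x) ^ 2) x :=
  (hu'.hasDerivAt.div hu.hasDerivAt hx).congr_deriv (by field_simp)

theorem hasDerivAt_darbouxTransform (hu : DifferentiableAt ℝ u x)
    (hu' : DifferentiableAt ℝ (deriv u) x) (hx : u x ≠ 0)
    (hψ : DifferentiableAt ℝ ψ x) (hψ' : DifferentiableAt ℝ (deriv ψ) x) :
    HasDerivAt (darbouxTransform u ψ)
      ((-deriv (deriv ψ) x + (deriv (deriv u) x / u x - (deriv u x / u x) ^ 2) * ψ x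
        + deriv u x / u x * deriv ψ x) / √2) x :=
  ((hψ'.hasDerivAt.neg.add ((hasDerivAt_deriv_div_self hu hu' hx).mul hψ.hasDerivAt)).div_const
    √2).congr_deriv (by ring)

theorem hasDerivAt_mul_darbouxTransform {V ε E : ℝ} (hu : DifferentiableAt ℝ u x)
    (hu' : DifferentiableAt ℝ (deriv u) x) (hx : u x ≠ 0)
    (hψ : DifferentiableAt ℝ ψ x) (hψ' : DifferentiableAt ℝ (deriv ψ) x)
    (hueq : -(1 / 2) * deriv (deriv u) x + V * u x = ε * u x)
    (hψeq : -(1 / 2) * deriv (deriv ψ) x + V * ψ x = E * ψ x) :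
    HasDerivAt (fun y => ψ y * darbouxTransform u ψ y / √2)
      ((E - ε) * ψ x ^ 2 - darbouxTransform u ψ x ^ 2) x := by
  refine ((hψ.hasDerivAt.mul (hasDerivAt_darbouxTransform hu hu' hx hψ hψ')).div_const
    √2).congr_deriv ?_
  have hu'' : deriv (deriv u) x = 2 * (V - ε) * u x := by linarith
  have hψ'' : deriv (deriv ψ) x = 2 * (V - E) * ψ x := by linarith
  have hsqrt : √2 ^ 2 = 2 := sq_sqrt zero_le_two
  rw [darbouxTransform, hu'', hψ'']
  field_simp
  rw [hsqrt]
  ring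

end Darboux

theorem statement11 (a b : EReal) (hab : a < b)
    (I : Set ℝ) (hI : I = {x : ℝ | a < (x : EReal) ∧ (x : EReal) < b})
    (V₀ : ℝ → ℝ) (ε E : ℝ) (u : ℝ → ℝ)
    (hu : ∀ x ∈ I, DifferentiableAt ℝ u x ∧ DifferentiableAt ℝ (deriv u) x)
    (hupos : ∀ x ∈ I, 0 < u x)
    (hueq : ∀ x ∈ I, -(1 / 2) * deriv (deriv u) x + V₀ x * u x = ε * u x)
    (κ : ℝ → ℝ) (hκ : κ = fun x => deriv u x / u x)
    (ψ : ℝ → ℝ)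
    (hψ : ∀ x ∈ I, DifferentiableAt ℝ ψ x ∧ DifferentiableAt ℝ (deriv ψ) x)
    (hψeq : ∀ x ∈ I, -(1 / 2) * deriv (deriv ψ) x + V₀ x * ψ x = E * ψ x)
    (φ : ℝ → ℝ) (hφ : φ = fun x => (-(deriv ψ x) + κ x * ψ x) / Real.sqrt 2)
    (hψint : IntegrableOn (fun x => ψ x ^ 2) I)
    (hφint : IntegrableOn (fun x => φ x ^ 2) I)
    (hlima : Tendsto (fun x : ℝ => ψ x * φ x / Real.sqrt 2)
      (Filter.comap (fun x : ℝ => (x : EReal)) (𝓝[>] a)) (𝓝 0))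
    (hlimb : Tendsto (fun x : ℝ => ψ x * φ x / Real.sqrt 2)
      (Filter.comap (fun x : ℝ => (x : EReal)) (𝓝[<] b)) (𝓝 0)) :
    ∫ x in I, φ x ^ 2 = (E - ε) * ∫ x in I, ψ x ^ 2 := by
  obtain rfl : φ = darbouxTransform u ψ := by subst hκ hφ; rfl
  have hderiv : ∀ x ∈ I, HasDerivAt (fun y => ψ y * darbouxTransform u ψ y / √2)
      ((E - ε) * ψ x ^ 2 - darbouxTransform u ψ x ^ 2) x := fun x hx =>
    hasDerivAt_mul_darbouxTransform (hu x hx).1 (hu x hx).2 (hupos x hx).ne' (hψ x hx).1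
      (hψ x hx).2 (hueq x hx) (hψeq x hx)
  obtain rfl : I = ((↑) : ℝ → EReal) ⁻¹' Ioo a b := hI
  have hψint' := hψint.const_mul (E - ε)
  have hFTC := integral_preimage_coe_Ioo_eq_sub_of_hasDerivAt_of_tendsto hab hderiv
    (hψint'.sub hφint) hlima hlimb
  rw [integral_sub hψint' hφint, integral_const_mul, sub_self, sub_eq_zero] at hFTC
  exact hFTC.symm
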